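/- arXiv:q-alg/9706007 — 2 statements merged into one kernel-verified Lean document; each statement's English description precedes it below -/
import Mathlib

section
/- Let k be a field, H a Hopf algebra over k, and R a universal R-matrix on H. Then the subspaces H_l and H_r of H are subalgebras: 1 ∈ H_l, 1 ∈ H_r, and for all x, y ∈ H_l one has x·y ∈ H_l, and likewise for H_r. -/
open scoped TensorProduct

noncomputable section

variable (k H : Type*) [Field k] [Ring H] [HopfAlgebra k H]

/-- The comultiplication as an algebra map. -/
abbrev Δ : H →ₐ[k] H ⊗[k] H := Bialgebra.comulAlgHom k H

/-- The flip `x ⊗ y ↦ y ⊗ x` of the tensor square, as an algebra map. -/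
abbrev τ : H ⊗[k] H →ₐ[k] H ⊗[k] H := (Algebra.TensorProduct.comm k H H).toAlgHom

/-- `x ⊗ y ↦ x ⊗ y ⊗ 1`. -/
abbrev ι₁₂ : H ⊗[k] H →ₐ[k] H ⊗[k] (H ⊗[k] H) :=
  Algebra.TensorProduct.map (AlgHom.id k H) Algebra.TensorProduct.includeLeft

/-- `x ⊗ y ↦ x ⊗ 1 ⊗ y`. -/
abbrev ι₁₃ : H ⊗[k] H →ₐ[k] H ⊗[k] (H ⊗[k] H) :=
  Algebra.TensorProduct.map (AlgHom.id k H) Algebra.TensorProduct.includeRight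

/-- `x ⊗ y ↦ 1 ⊗ x ⊗ y`. -/
abbrev ι₂₃ : H ⊗[k] H →ₐ[k] H ⊗[k] (H ⊗[k] H) :=
  Algebra.TensorProduct.includeRight

/-- `id ⊗ Δ`. -/
abbrev idΔ : H ⊗[k] H →ₐ[k] H ⊗[k] (H ⊗[k] H) :=
  Algebra.TensorProduct.map (AlgHom.id k H) (Bialgebra.comulAlgHom k H)

/-- `Δ ⊗ id` (re-associated to land in `H ⊗ (H ⊗ H)`). -/
abbrev Δid : H ⊗[k] H →ₐ[k] H ⊗[k] (H ⊗[k] H) :=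
  (Algebra.TensorProduct.assoc k k k H H H).toAlgHom.comp
    (Algebra.TensorProduct.map (Bialgebra.comulAlgHom k H) (AlgHom.id k H))

/-- `R` is a universal R-matrix (quasitriangular structure) on `H`. -/
def IsUnivRMatrix (R : H ⊗[k] H) : Prop :=
  IsUnit R ∧
  (∀ h : H, R * τ k H (Δ k H h) = Δ k H h * R) ∧
  idΔ k H R = ι₁₃ k H R * ι₁₂ k H R ∧
  Δid k H R = ι₁₃ k H R * ι₂₃ k H R

/-- `ε ⊗ id : H ⊗ H → H`, `x ⊗ y ↦ ε(x)·y`. -/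
abbrev εid : H ⊗[k] H →ₐ[k] H :=
  (Algebra.TensorProduct.lid k H).toAlgHom.comp
    (Algebra.TensorProduct.map (Bialgebra.counitAlgHom k H) (AlgHom.id k H))

/-- `id ⊗ ε : H ⊗ H → H`, `x ⊗ y ↦ ε(y)·x`. -/
abbrev idε : H ⊗[k] H →ₐ[k] H :=
  ((Algebra.TensorProduct.rid k k H).toAlgHom.restrictScalars k).comp
    (Algebra.TensorProduct.map (AlgHom.id k H) (Bialgebra.counitAlgHom k H))

/-- `S ⊗ id : H ⊗ H → H ⊗ H`. -/
abbrev Sid : H ⊗[k] H →ₗ[k] H ⊗[k] H :=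
  LinearMap.rTensor H (HopfAlgebra.antipode (R := k))

/-- `S ⊗ S : H ⊗ H → H ⊗ H`. -/
abbrev SS : H ⊗[k] H →ₗ[k] H ⊗[k] H :=
  TensorProduct.map (HopfAlgebra.antipode (R := k)) (HopfAlgebra.antipode (R := k))

/-- The Markov element `u = μ((S ⊗ id)(τ(R)))` of a bivector `R`. -/
def markov (R : H ⊗[k] H) : H :=
  LinearMap.mul' k H (Sid k H ((TensorProduct.comm k H H) R))

/-- `(id ⊗ l)(R)` : applying a linear functional to the second tensor factor. -/
def evR (l : H →ₗ[k] k) : H ⊗[k] H →ₗ[k] H :=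
  (TensorProduct.rid k H).toLinearMap ∘ₗ LinearMap.lTensor H l

/-- `(l ⊗ id)(R)` : applying a linear functional to the first tensor factor. -/
def evL (l : H →ₗ[k] k) : H ⊗[k] H →ₗ[k] H :=
  (TensorProduct.lid k H).toLinearMap ∘ₗ LinearMap.rTensor H l

/-- The subspace `H_l = {(id ⊗ l)(R) : l ∈ H*}`. -/
def Hl (R : H ⊗[k] H) : Set H := Set.range fun l : H →ₗ[k] k => evR k H l R

/-- The subspace `H_r = {(l ⊗ id)(R) : l ∈ H*}`. -/
def Hr (R : H ⊗[k] H) : Set H := Set.range fun l : H →ₗ[k] k => evL k H l R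

/-- `H` is cocommutative: `τ ∘ Δ = Δ`. -/
def IsCocomm : Prop :=
  ∀ x : H, (TensorProduct.comm k H H) (Coalgebra.comul (R := k) x) = Coalgebra.comul x

/-- The adjoint action `x ↦ x^h = Σ h₍₁₎ · x · S(h₍₂₎)` of `h`, as an endomorphism of `H`. -/
def adEnd (h : H) : H →ₗ[k] H :=
  TensorProduct.lift
    (LinearMap.mk₂ k
      (fun a b => LinearMap.mulRight k (HopfAlgebra.antipode (R := k) b) ∘ₗ
        LinearMap.mulLeft k a)
      (fun a a' b => by ext x; simp [add_mul])
      (fun c a b => by ext x; simp [smul_mul_assoc])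
      (fun a b b' => by ext x; simp [mul_add])
      (fun c a b => by ext x; simp [mul_smul_comm]))
    (Coalgebra.comul h)

/-!
Slicing `R` by functionals turns the coproduct axioms into multiplicativity for the convolution
product `⋆` on `H*`: `(Δ ⊗ id)(R) = R₁₃ R₂₃` gives `((l ⋆ m) ⊗ id)(R) = (l ⊗ id)(R) · (m ⊗ id)(R)`,
and `(id ⊗ Δ)(R) = R₁₃ R₁₂` gives `(id ⊗ (m ⋆ l))(R) = (id ⊗ l)(R) · (id ⊗ m)(R)`. The unit comes
from slicing by the counit `ε`, the unit of `⋆`: `(ε ⊗ id)(R)` is then idempotent, and it is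
invertible because `ε ⊗ id` is an algebra map, so it equals `1`; likewise for `(id ⊗ ε)(R)`.
-/

open Coalgebra WithConv

section Slices

variable {k H : Type*} [Field k] [Ring H] [HopfAlgebra k H]

@[simp]
lemma evL_tmul (l : H →ₗ[k] k) (a b : H) : evL k H l (a ⊗ₜ b) = l a • b := by
  simp [evL]

@[simp]
lemma evR_tmul (l : H →ₗ[k] k) (a b : H) : evR k H l (a ⊗ₜ b) = l b • a := by
  simp [evR]

lemma evL_counit : evL k H (counit (R := k)) = (εid k H).toLinearMap := by
  ext; simp

lemma evR_counit : evR k H (counit (R := k)) = (idε k H).toLinearMap := by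
  ext; simp

lemma toConv_counit : toConv (counit (R := k) (A := H)) = 1 := rfl

/-- `a ⊗ b ⊗ c ↦ l(a) m(b) c`. -/
def evL₂ (l m : H →ₗ[k] k) : H ⊗[k] (H ⊗[k] H) →ₗ[k] H :=
  (TensorProduct.lid k H).toLinearMap ∘ₗ
    LinearMap.rTensor H (LinearMap.mul' k k ∘ₗ TensorProduct.map l m) ∘ₗ
    (TensorProduct.assoc k H H H).symm.toLinearMap

/-- `a ⊗ b ⊗ c ↦ m(b) l(c) a`. -/
def evR₂ (l m : H →ₗ[k] k) : H ⊗[k] (H ⊗[k] H) →ₗ[k] H :=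
  (TensorProduct.rid k H).toLinearMap ∘ₗ
    LinearMap.lTensor H (LinearMap.mul' k k ∘ₗ TensorProduct.map m l)

lemma evL₂_comp_Δid (l m : H →ₗ[k] k) :
    evL₂ l m ∘ₗ (Δid k H).toLinearMap = evL k H (toConv l * toConv m).ofConv := by
  ext a b
  simp [evL₂, evL, TensorProduct.AlgebraTensorModule.assoc_eq]

lemma evR₂_comp_idΔ (l m : H →ₗ[k] k) :
    evR₂ l m ∘ₗ (idΔ k H).toLinearMap = evR k H (toConv m * toConv l).ofConv := by
  ext a b
  simp [evR₂, evR]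

lemma evL₂_ι₁₃_mul_ι₂₃ (l m : H →ₗ[k] k) (z w : H ⊗[k] H) :
    evL₂ l m (ι₁₃ k H z * ι₂₃ k H w) = evL k H l z * evL k H m w := by
  induction z using TensorProduct.induction_on with
  | zero => simp
  | add x y hx hy => simp only [map_add, add_mul, hx, hy]
  | tmul a b =>
    induction w using TensorProduct.induction_on with
    | zero => simp
    | add x y hx hy => simp only [map_add, mul_add, hx, hy]
    | tmul c d => simp [evL₂, smul_smul, mul_comm]

lemma evR₂_ι₁₃_mul_ι₁₂ (l m : H →ₗ[k] k) (z w : H ⊗[k] H) :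
    evR₂ l m (ι₁₃ k H z * ι₁₂ k H w) = evR k H l z * evR k H m w := by
  induction z using TensorProduct.induction_on with
  | zero => simp
  | add x y hx hy => simp only [map_add, add_mul, hx, hy]
  | tmul a b =>
    induction w using TensorProduct.induction_on with
    | zero => simp
    | add x y hx hy => simp only [map_add, mul_add, hx, hy]
    | tmul c d => simp [evR₂, smul_smul, mul_comm]

end Slices

section RMatrix

variable {k H : Type*} [Field k] [Ring H] [HopfAlgebra k H] {R : H ⊗[k] H}

lemma evL_convMul_apply (hR : Δid k H R = ι₁₃ k H R * ι₂₃ k H R) (l m : H →ₗ[k] k) :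
    evL k H (toConv l * toConv m).ofConv R = evL k H l R * evL k H m R := by
  rw [← evL₂_comp_Δid, LinearMap.comp_apply, AlgHom.toLinearMap_apply, hR, evL₂_ι₁₃_mul_ι₂₃]

lemma evR_convMul_apply (hR : idΔ k H R = ι₁₃ k H R * ι₁₂ k H R) (l m : H →ₗ[k] k) :
    evR k H (toConv m * toConv l).ofConv R = evR k H l R * evR k H m R := by
  rw [← evR₂_comp_idΔ, LinearMap.comp_apply, AlgHom.toLinearMap_apply, hR, evR₂_ι₁₃_mul_ι₁₂]

lemma evL_counit_apply_eq_one (hu : IsUnit R) (hR : Δid k H R = ι₁₃ k H R * ι₂₃ k H R) :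
    evL k H counit R = 1 := by
  have hunit : IsUnit (evL k H counit R) := by
    rw [evL_counit]; exact hu.map (εid k H)
  have hidem : IsIdempotentElem (evL k H counit R) := by
    rw [IsIdempotentElem, ← evL_convMul_apply hR, toConv_counit, one_mul]; rfl
  exact (IsIdempotentElem.iff_eq_one_of_isUnit hunit).mp hidem

lemma evR_counit_apply_eq_one (hu : IsUnit R) (hR : idΔ k H R = ι₁₃ k H R * ι₁₂ k H R) :
    evR k H counit R = 1 := by
  have hunit : IsUnit (evR k H counit R) := by
    rw [evR_counit]; exact hu.map (idε k H)
  have hidem : IsIdempotentElem (evR k H counit R) := by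
    rw [IsIdempotentElem, ← evR_convMul_apply hR, toConv_counit, one_mul]; rfl
  exact (IsIdempotentElem.iff_eq_one_of_isUnit hunit).mp hidem

end RMatrix

/-- For a universal R-matrix `R`, the subspaces `H_l` and `H_r` are subalgebras of `H`. -/
theorem Hl_Hr_subalgebra {k H : Type*} [Field k] [Ring H] [HopfAlgebra k H]
    (R : H ⊗[k] H) (hR : IsUnivRMatrix k H R) :
    ((1 : H) ∈ Hl k H R ∧ ∀ x ∈ Hl k H R, ∀ y ∈ Hl k H R, x * y ∈ Hl k H R) ∧
    ((1 : H) ∈ Hr k H R ∧ ∀ x ∈ Hr k H R, ∀ y ∈ Hr k H R, x * y ∈ Hr k H R) := by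
  obtain ⟨hu, -, hidΔ, hΔid⟩ := hR
  refine ⟨⟨⟨counit, evR_counit_apply_eq_one hu hidΔ⟩, ?_⟩,
    ⟨⟨counit, evL_counit_apply_eq_one hu hΔid⟩, ?_⟩⟩
  · rintro _ ⟨l, rfl⟩ _ ⟨m, rfl⟩
    exact ⟨(toConv m * toConv l).ofConv, evR_convMul_apply hidΔ l m⟩
  · rintro _ ⟨l, rfl⟩ _ ⟨m, rfl⟩
    exact ⟨(toConv l * toConv m).ofConv, evL_convMul_apply hΔid l m⟩

end
end

section
/- Let k be an algebraically closed field of characteristic zero, A a finite abelian group, and γ : Â × Â → kˣ a 2-cocycle, i.e. γ(χ,ξ)·γ(χξ,ζ) = γ(ξ,ζ)·γ(χ,ξζ) for all χ, ξ, ζ ∈ Â. For χ ∈ Â let e_χ = |A|⁻¹·Σ_{a∈A} χ(a)⁻¹·a ∈ k[A], and set F_γ = Σ_{χ,ξ∈Â} γ(χ,ξ)·(e_χ ⊗ e_ξ) ∈ k[A]⊗k[A]. Then F_γ is invertible with inverse F_{γ⁻¹} (where γ⁻¹(χ,ξ) = γ(χ,ξ)⁻¹), and F_γ satisfies the twist (dual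 2-cocycle) equation (1⊗F_γ)·(id⊗Δ)(F_γ) = (F_γ⊗1)·(Δ⊗id)(F_γ) in k[A]⊗k[A]⊗k[A]. -/
open scoped TensorProduct

noncomputable section

variable (k G : Type*) [Field k] [Group G]

/-- The comultiplication `Δ(g) = g ⊗ g` of the group algebra `k[G]`, as an algebra map. -/
def gComul : MonoidAlgebra k G →ₐ[k] MonoidAlgebra k G ⊗[k] MonoidAlgebra k G :=
  MonoidAlgebra.lift k _ G
    { toFun := fun g => MonoidAlgebra.of k G g ⊗ₜ[k] MonoidAlgebra.of k G g
      map_one' := by rw [Algebra.TensorProduct.one_def]; simp [MonoidAlgebra.one_def]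
      map_mul' := fun g h => by simp [Algebra.TensorProduct.tmul_mul_tmul] }

/-- The flip of the tensor square of the group algebra. -/
abbrev gτ : MonoidAlgebra k G ⊗[k] MonoidAlgebra k G →ₐ[k]
    MonoidAlgebra k G ⊗[k] MonoidAlgebra k G :=
  (Algebra.TensorProduct.comm k (MonoidAlgebra k G) (MonoidAlgebra k G)).toAlgHom

/-- `x ⊗ y ↦ x ⊗ y ⊗ 1`. -/
abbrev gι₁₂ : MonoidAlgebra k G ⊗[k] MonoidAlgebra k G →ₐ[k]
    MonoidAlgebra k G ⊗[k] (MonoidAlgebra k G ⊗[k] MonoidAlgebra k G) :=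
  Algebra.TensorProduct.map (AlgHom.id k _) Algebra.TensorProduct.includeLeft

/-- `x ⊗ y ↦ x ⊗ 1 ⊗ y`. -/
abbrev gι₁₃ : MonoidAlgebra k G ⊗[k] MonoidAlgebra k G →ₐ[k]
    MonoidAlgebra k G ⊗[k] (MonoidAlgebra k G ⊗[k] MonoidAlgebra k G) :=
  Algebra.TensorProduct.map (AlgHom.id k _) Algebra.TensorProduct.includeRight

/-- `x ⊗ y ↦ 1 ⊗ x ⊗ y`. -/
abbrev gι₂₃ : MonoidAlgebra k G ⊗[k] MonoidAlgebra k G →ₐ[k]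
    MonoidAlgebra k G ⊗[k] (MonoidAlgebra k G ⊗[k] MonoidAlgebra k G) :=
  Algebra.TensorProduct.includeRight

/-- `id ⊗ Δ`. -/
abbrev gidΔ : MonoidAlgebra k G ⊗[k] MonoidAlgebra k G →ₐ[k]
    MonoidAlgebra k G ⊗[k] (MonoidAlgebra k G ⊗[k] MonoidAlgebra k G) :=
  Algebra.TensorProduct.map (AlgHom.id k _) (gComul k G)

/-- `Δ ⊗ id`, re-associated. -/
abbrev gΔid : MonoidAlgebra k G ⊗[k] MonoidAlgebra k G →ₐ[k]
    MonoidAlgebra k G ⊗[k] (MonoidAlgebra k G ⊗[k] MonoidAlgebra k G) :=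
  (Algebra.TensorProduct.assoc k k k _ _ _).toAlgHom.comp
    (Algebra.TensorProduct.map (gComul k G) (AlgHom.id k _))

/-- `R` is a universal R-matrix (quasitriangular structure) on the group algebra `k[G]`. -/
def IsGroupRMatrix (R : MonoidAlgebra k G ⊗[k] MonoidAlgebra k G) : Prop :=
  IsUnit R ∧
  (∀ h : MonoidAlgebra k G, R * gτ k G (gComul k G h) = gComul k G h * R) ∧
  gidΔ k G R = gι₁₃ k G R * gι₁₂ k G R ∧
  gΔid k G R = gι₁₃ k G R * gι₂₃ k G R


/-- The idempotent `e_χ = |A|⁻¹ Σ_{a∈A} χ(a)⁻¹ · a` of the group algebra `k[A]`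
associated to a character `χ ∈ Â`. -/
def charIdem {k A : Type*} [Field k] [CommGroup A] [Fintype A] (χ : A →* kˣ) :
    MonoidAlgebra k A :=
  (Fintype.card A : k)⁻¹ • ∑ a : A, (((χ a)⁻¹ : kˣ) : k) • MonoidAlgebra.of k A a

/-- The dual twist `F_γ = Σ_{χ,ξ∈Â} γ(χ,ξ) e_χ ⊗ e_ξ ∈ k[A] ⊗ k[A]` associated to a
function `γ : Â × Â → kˣ`. -/
def dualTwist {k A : Type*} [Field k] [CommGroup A] [Fintype A]
    (γ : (A →* kˣ) → (A →* kˣ) → kˣ) : MonoidAlgebra k A ⊗[k] MonoidAlgebra k A :=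
  ∑ᶠ χ : A →* kˣ, ∑ᶠ ξ : A →* kˣ, ((γ χ ξ : k)) • (charIdem χ ⊗ₜ[k] charIdem ξ)

/-!
The `e_χ` are orthogonal idempotents summing to `1` (orthogonality of characters, plus the fact
that the `|A|` characters separate the points of `A`), hence so are the `e_χ ⊗ e_ξ ⊗ e_ζ`, and an
element of `k[A]^⊗3` is determined by its products with them. As `(a ⊗ a)(e_ξ ⊗ e_ζ) =
(ξζ)(a) e_ξ ⊗ e_ζ`, `Δ(e_{ξζ})` fixes `e_ξ ⊗ e_ζ`, so the four factors of the twist equation act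
on `e_χ ⊗ e_ξ ⊗ e_ζ` by the scalars `γ(ξ,ζ)`, `γ(χ,ξζ)`, `γ(χ,ξ)`, `γ(χξ,ζ)`, and the equation
becomes the cocycle identity. In the same way `F_γ F_δ = F_{γδ}` and `F_1 = 1`.
-/

theorem OrthogonalIdempotents.tmul {k R S I J : Type*} [CommSemiring k] [Semiring R]
    [Algebra k R] [Semiring S] [Algebra k S] {e : I → R} {f : J → S}
    (he : OrthogonalIdempotents e) (hf : OrthogonalIdempotents f) :
    OrthogonalIdempotents fun p : I × J => e p.1 ⊗ₜ[k] f p.2 where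
  idem p := by
    simp only [IsIdempotentElem, Algebra.TensorProduct.tmul_mul_tmul, (he.idem _).eq,
      (hf.idem _).eq]
  ortho := by
    rintro ⟨i, j⟩ ⟨i', j'⟩ hne
    simp only [Algebra.TensorProduct.tmul_mul_tmul]
    by_cases hi : i = i'
    · subst hi
      have hj : j ≠ j' := fun hj => hne (by rw [hj])
      rw [hf.ortho hj, TensorProduct.tmul_zero]
    · rw [he.ortho hi, TensorProduct.zero_tmul]

namespace CompleteOrthogonalIdempotents

variable {R I : Type*} [Semiring R] [Fintype I] {e : I → R}

theorem ext_mul (he : CompleteOrthogonalIdempotents e) {x y : R}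
    (h : ∀ i, x * e i = y * e i) : x = y := by
  rw [← mul_one x, ← mul_one y, ← he.complete, Finset.mul_sum, Finset.mul_sum]
  exact Finset.sum_congr rfl fun i _ => h i

theorem tmul {k S J : Type*} [CommSemiring k] [Algebra k R] [Semiring S] [Algebra k S]
    [Fintype J] {f : J → S} (he : CompleteOrthogonalIdempotents e)
    (hf : CompleteOrthogonalIdempotents f) :
    CompleteOrthogonalIdempotents fun p : I × J => e p.1 ⊗ₜ[k] f p.2 where
  toOrthogonalIdempotents := he.toOrthogonalIdempotents.tmul hf.toOrthogonalIdempotents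
  complete := calc
    ∑ p : I × J, e p.1 ⊗ₜ[k] f p.2 = (∑ i, e i) ⊗ₜ[k] ∑ j, f j := by
      rw [Fintype.sum_prod_type, TensorProduct.sum_tmul]
      simp only [TensorProduct.tmul_sum]
    _ = 1 := by rw [he.complete, hf.complete, Algebra.TensorProduct.one_def]

end CompleteOrthogonalIdempotents

theorem OrthogonalIdempotents.sum_smul_mul {k R I : Type*} [CommSemiring k] [Semiring R]
    [Algebra k R] [Fintype I] {e : I → R} (he : OrthogonalIdempotents e) (c : I → k) (j : I) :
    (∑ i, c i • e i) * e j = c j • e j := by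
  classical
  simp_rw [Finset.sum_mul, smul_mul_assoc, he.mul_eq, smul_ite, smul_zero,
    Finset.sum_ite_eq', Finset.mem_univ, if_true]

theorem gComul_of {k G : Type*} [Field k] [Group G] (g : G) :
    gComul k G (MonoidAlgebra.of k G g) = MonoidAlgebra.of k G g ⊗ₜ[k] MonoidAlgebra.of k G g := by
  simp [gComul]

theorem sum_units_coe_apply_eq_zero {R G : Type*} [CommRing R] [IsDomain R] [Group G]
    [Fintype G] {f : G →* Rˣ} (hf : f ≠ 1) : ∑ g, (f g : R) = 0 :=
  sum_hom_units_eq_zero ((Units.coeHom R).comp f) fun h =>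
    hf (MonoidHom.ext fun g => Units.ext (DFunLike.congr_fun h g))

section charIdem

open MonoidAlgebra

variable {k A : Type*} [Field k] [CommGroup A] [Fintype A]

theorem of_mul_charIdem (χ : A →* kˣ) (a : A) :
    of k A a * charIdem χ = (χ a : k) • charIdem χ := by
  simp only [charIdem, mul_smul_comm, Finset.mul_sum, Finset.smul_sum]
  refine Fintype.sum_equiv (Equiv.mulLeft a) _ _ fun b => ?_
  rw [Equiv.coe_mulLeft, ← map_mul, smul_comm (χ a : k), smul_smul (χ a : k)]
  congr 2
  rw [← Units.val_mul, map_mul, mul_inv, mul_inv_cancel_left]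

open scoped Classical in
theorem map_charIdem_mul_of_eigen {R : Type*} [Semiring R] [Algebra k R]
    (hA : (Fintype.card A : k) ≠ 0) (φ : MonoidAlgebra k A →ₐ[k] R) {χ : A →* kˣ} {v : R}
    (hv : ∀ a, φ (of k A a) * v = (χ a : k) • v) (ψ : A →* kˣ) :
    φ (charIdem ψ) * v = if ψ = χ then v else 0 := by
  have hcoe : ∀ a, (((ψ a)⁻¹ : kˣ) : k) * (χ a : k) = ((ψ⁻¹ * χ) a : k) := fun a => by
    simp
  simp only [charIdem, map_smul, map_sum, smul_mul_assoc, Finset.sum_mul, hv, smul_smul, hcoe,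
    ← Finset.sum_smul]
  split_ifs with h
  · simp [h, hA]
  · rw [sum_units_coe_apply_eq_zero fun h' => h (inv_mul_eq_one.mp h'), mul_zero, zero_smul]

theorem gComul_charIdem_mul_tmul (hA : (Fintype.card A : k) ≠ 0) (ξ ζ : A →* kˣ) :
    gComul k A (charIdem (ξ * ζ)) * (charIdem ξ ⊗ₜ[k] charIdem ζ) =
      charIdem ξ ⊗ₜ[k] charIdem ζ := by
  refine (map_charIdem_mul_of_eigen hA _ (χ := ξ * ζ) (fun a => ?_) _).trans (if_pos rfl)
  rw [gComul_of, Algebra.TensorProduct.tmul_mul_tmul, of_mul_charIdem, of_mul_charIdem,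
    TensorProduct.smul_tmul_smul]
  simp

theorem sum_charIdem [Fintype (A →* kˣ)] [HasEnoughRootsOfUnity k (Monoid.exponent A)]
    (hA : (Fintype.card A : k) ≠ 0) : ∑ χ : A →* kˣ, charIdem (k := k) χ = 1 := by
  classical
  have hcol : ∀ a, ∑ χ : A →* kˣ, (((χ a)⁻¹ : kˣ) : k) =
      if a = 1 then (Fintype.card A : k) else 0 := fun a => by
    simp_rw [← map_inv]
    split_ifs with ha
    · simp [ha, ← Nat.card_eq_fintype_card,
        CommGroup.card_monoidHom_of_hasEnoughRootsOfUnity A k]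
    · refine sum_units_coe_apply_eq_zero (f := MonoidHom.eval (N := kˣ) a⁻¹) fun h => ?_
      obtain ⟨χ, hχ⟩ :=
        CommGroup.exists_apply_ne_one_of_hasEnoughRootsOfUnity A k (inv_ne_one.mpr ha)
      exact hχ (DFunLike.congr_fun h χ)
  simp only [charIdem, ← Finset.smul_sum]
  rw [Finset.sum_comm]
  simp only [← Finset.sum_smul, hcol, ite_smul, zero_smul, Finset.sum_ite_eq', Finset.mem_univ,
    if_true, smul_smul, inv_mul_cancel₀ hA, one_smul]
  rfl

theorem orthogonalIdempotents_charIdem (hA : (Fintype.card A : k) ≠ 0) :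
    OrthogonalIdempotents (charIdem (k := k) (A := A)) := by
  classical
  have h χ := map_charIdem_mul_of_eigen hA (AlgHom.id k _) (of_mul_charIdem χ)
  exact ⟨fun χ => (h χ χ).trans (if_pos rfl), fun ψ χ hne => (h χ ψ).trans (if_neg hne)⟩

theorem completeOrthogonalIdempotents_charIdem [Fintype (A →* kˣ)]
    [HasEnoughRootsOfUnity k (Monoid.exponent A)] (hA : (Fintype.card A : k) ≠ 0) :
    CompleteOrthogonalIdempotents (charIdem (k := k) (A := A)) :=
  ⟨orthogonalIdempotents_charIdem hA, sum_charIdem hA⟩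

end charIdem

section dualTwist

variable {k A : Type*} [Field k] [CommGroup A] [Fintype A] [Fintype (A →* kˣ)]

theorem dualTwist_eq_sum (γ : (A →* kˣ) → (A →* kˣ) → kˣ) :
    dualTwist γ =
      ∑ p : (A →* kˣ) × (A →* kˣ), (γ p.1 p.2 : k) • (charIdem p.1 ⊗ₜ[k] charIdem p.2) := by
  simp only [dualTwist, finsum_eq_sum_of_fintype, Fintype.sum_prod_type]

theorem dualTwist_mul_tmul (hA : (Fintype.card A : k) ≠ 0) (γ : (A →* kˣ) → (A →* kˣ) → kˣ)
    (χ ξ : A →* kˣ) :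
    dualTwist γ * (charIdem χ ⊗ₜ[k] charIdem ξ) = (γ χ ξ : k) • (charIdem χ ⊗ₜ[k] charIdem ξ) := by
  rw [dualTwist_eq_sum]
  exact ((orthogonalIdempotents_charIdem hA).tmul (orthogonalIdempotents_charIdem hA)).sum_smul_mul
    (fun p => (γ p.1 p.2 : k)) (χ, ξ)

theorem map_dualTwist_mul {S : Type*} [Semiring S] [Algebra k S]
    (hA : (Fintype.card A : k) ≠ 0) (γ : (A →* kˣ) → (A →* kˣ) → kˣ)
    (Φ : MonoidAlgebra k A ⊗[k] MonoidAlgebra k A →ₐ[k] S) {χ ξ : A →* kˣ} {w : S}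
    (hw : Φ (charIdem χ ⊗ₜ[k] charIdem ξ) * w = w) : Φ (dualTwist γ) * w = (γ χ ξ : k) • w := by
  rw [← hw, ← mul_assoc, ← map_mul, dualTwist_mul_tmul hA, map_smul, smul_mul_assoc]

theorem dualTwist_mul [HasEnoughRootsOfUnity k (Monoid.exponent A)]
    (hA : (Fintype.card A : k) ≠ 0) (γ δ : (A →* kˣ) → (A →* kˣ) → kˣ) :
    dualTwist γ * dualTwist δ = dualTwist fun χ ξ => γ χ ξ * δ χ ξ := by
  refine ((completeOrthogonalIdempotents_charIdem hA).tmul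
    (completeOrthogonalIdempotents_charIdem hA)).ext_mul fun ⟨χ, ξ⟩ => ?_
  simp only [mul_assoc, dualTwist_mul_tmul hA, mul_smul_comm, smul_smul, Units.val_mul,
    mul_comm (δ χ ξ : k)]

theorem dualTwist_one [HasEnoughRootsOfUnity k (Monoid.exponent A)]
    (hA : (Fintype.card A : k) ≠ 0) : dualTwist (fun _ _ => (1 : kˣ) : (A →* kˣ) → _ → _) = 1 := by
  rw [dualTwist_eq_sum]
  simpa using ((completeOrthogonalIdempotents_charIdem hA).tmul (k := k)
    (completeOrthogonalIdempotents_charIdem hA)).complete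

end dualTwist

section legs

variable {k A : Type*} [Field k] [CommGroup A] [Fintype A]

theorem gι₂₃_charIdem_mul (hA : (Fintype.card A : k) ≠ 0) (χ ξ ζ : A →* kˣ) :
    gι₂₃ k A (charIdem ξ ⊗ₜ[k] charIdem ζ) * (charIdem χ ⊗ₜ[k] (charIdem ξ ⊗ₜ[k] charIdem ζ)) =
      charIdem χ ⊗ₜ[k] (charIdem ξ ⊗ₜ[k] charIdem ζ) := by
  have he := orthogonalIdempotents_charIdem (k := k) (A := A) hA
  simp [Algebra.TensorProduct.tmul_mul_tmul, (he.idem _).eq]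

theorem gι₁₂_charIdem_mul (hA : (Fintype.card A : k) ≠ 0) (χ ξ ζ : A →* kˣ) :
    gι₁₂ k A (charIdem χ ⊗ₜ[k] charIdem ξ) * (charIdem χ ⊗ₜ[k] (charIdem ξ ⊗ₜ[k] charIdem ζ)) =
      charIdem χ ⊗ₜ[k] (charIdem ξ ⊗ₜ[k] charIdem ζ) := by
  have he := orthogonalIdempotents_charIdem (k := k) (A := A) hA
  simp [Algebra.TensorProduct.tmul_mul_tmul, (he.idem _).eq]

theorem gidΔ_charIdem_mul (hA : (Fintype.card A : k) ≠ 0) (χ ξ ζ : A →* kˣ) :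
    gidΔ k A (charIdem χ ⊗ₜ[k] charIdem (ξ * ζ)) *
        (charIdem χ ⊗ₜ[k] (charIdem ξ ⊗ₜ[k] charIdem ζ)) =
      charIdem χ ⊗ₜ[k] (charIdem ξ ⊗ₜ[k] charIdem ζ) := by
  have he := orthogonalIdempotents_charIdem (k := k) (A := A) hA
  simp [Algebra.TensorProduct.tmul_mul_tmul, (he.idem _).eq, gComul_charIdem_mul_tmul hA]

theorem gΔid_charIdem_mul (hA : (Fintype.card A : k) ≠ 0) (χ ξ ζ : A →* kˣ) :
    gΔid k A (charIdem (χ * ξ) ⊗ₜ[k] charIdem ζ) *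
        (charIdem χ ⊗ₜ[k] (charIdem ξ ⊗ₜ[k] charIdem ζ)) =
      charIdem χ ⊗ₜ[k] (charIdem ξ ⊗ₜ[k] charIdem ζ) := by
  have he := orthogonalIdempotents_charIdem (k := k) (A := A) hA
  have hassoc : charIdem χ ⊗ₜ[k] (charIdem ξ ⊗ₜ[k] charIdem ζ) =
      Algebra.TensorProduct.assoc k k k _ _ _ ((charIdem χ ⊗ₜ[k] charIdem ξ) ⊗ₜ[k] charIdem ζ) :=
    rfl
  rw [hassoc]
  change Algebra.TensorProduct.assoc k k k _ _ _ (gComul k A (charIdem (χ * ξ)) ⊗ₜ[k] charIdem ζ) *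
    _ = _
  rw [← map_mul, Algebra.TensorProduct.tmul_mul_tmul, gComul_charIdem_mul_tmul hA, (he.idem ζ).eq]

end legs

/-- For a 2-cocycle `γ` on the character group `Â` of a finite abelian group `A` over an
algebraically closed field of characteristic zero, the element `F_γ` is invertible with
inverse `F_{γ⁻¹}`, and satisfies the twist (dual 2-cocycle) equation
`(1⊗F_γ)·(id⊗Δ)(F_γ) = (F_γ⊗1)·(Δ⊗id)(F_γ)`. -/
theorem dualTwist_cocycle {k A : Type*} [Field k] [IsAlgClosed k] [CharZero k]
    [CommGroup A] [Fintype A] (γ : (A →* kˣ) → (A →* kˣ) → kˣ)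
    (hγ : ∀ χ ξ ζ : A →* kˣ, γ χ ξ * γ (χ * ξ) ζ = γ ξ ζ * γ χ (ξ * ζ)) :
    dualTwist γ * dualTwist (fun χ ξ => (γ χ ξ)⁻¹) = 1 ∧
    dualTwist (fun χ ξ => (γ χ ξ)⁻¹) * dualTwist γ = 1 ∧
    gι₂₃ k A (dualTwist γ) * gidΔ k A (dualTwist γ) =
      gι₁₂ k A (dualTwist γ) * gΔid k A (dualTwist γ) := by
  have hA : (Fintype.card A : k) ≠ 0 := Nat.cast_ne_zero.mpr Fintype.card_ne_zero
  have : NeZero (Monoid.exponent A : k) :=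
    ⟨Nat.cast_ne_zero.mpr Monoid.exponent_ne_zero_of_finite⟩
  have := Fintype.ofFinite (A →* kˣ)
  refine ⟨?_, ?_, ?_⟩
  · simp only [dualTwist_mul hA, mul_inv_cancel, dualTwist_one hA]
  · simp only [dualTwist_mul hA, inv_mul_cancel, dualTwist_one hA]
  have he := completeOrthogonalIdempotents_charIdem (k := k) (A := A) hA
  refine (he.tmul (k := k) (he.tmul (k := k) he)).ext_mul fun ⟨χ, ξ, ζ⟩ => ?_
  simp only [mul_assoc, map_dualTwist_mul hA γ _ (gidΔ_charIdem_mul hA χ ξ ζ),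
    map_dualTwist_mul hA γ _ (gΔid_charIdem_mul hA χ ξ ζ), mul_smul_comm,
    map_dualTwist_mul hA γ _ (gι₂₃_charIdem_mul hA χ ξ ζ),
    map_dualTwist_mul hA γ _ (gι₁₂_charIdem_mul hA χ ξ ζ), smul_smul, ← Units.val_mul]
  rw [mul_comm (γ χ (ξ * ζ)), ← hγ, mul_comm (γ χ ξ)]

end
end
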